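/- arXiv:math-ph/0006020 — 4 statements merged into one kernel-verified Lean document; each statement's English description precedes it below -/
import Mathlib

section
/- Let φ_1,…,φ_N and ψ_1,…,ψ_N be functions in L²(Ω,μ) and f ∈ L^∞(Ω,μ). Then (1/N!) ∫_{Ω^N} det(φ_j(x_k)) · det(ψ_j(x_k)) · ∏_j f(x_j) dμ(x_j) = det( ∫_Ω φ_j(x) ψ_k(x) f(x) dμ(x) )_{j,k=1}^N (the Andréief identity). -/
/-!
Expanding both determinants as sums over permutations writes `det Φ(x) · det Ψ(x)` as a double
sum over `(σ, τ)` of products `∏ₖ φ_{σ k}(x_k) ψ_{τ k}(x_k)`, and Fubini integrates each of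
these to `∏ₖ M_{σ k, τ k}` with `M_{jk} = ∫ φ_j ψ_k`. For fixed `σ` the sum over `τ` is
`sign σ · det (M with rows permuted by σ) = det M`, so the double sum is `N! · det M`.
The factor `∏ f(x_j)` is absorbed into `ψ` beforehand by scaling the columns.
-/

open MeasureTheory Equiv

namespace Matrix

variable {n R : Type*} [Fintype n] [DecidableEq n] [CommRing R]

theorem det_mul_det_eq_sum_sum_sign_mul_prod (A B : Matrix n n R) :
    A.det * B.det = ∑ σ : Perm n, ∑ τ : Perm n,
      ((Perm.sign σ : ℤ) : R) * (Perm.sign τ : ℤ) * ∏ k, A (σ k) k * B (τ k) k := by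
  simp only [det_apply', Finset.sum_mul_sum, Finset.prod_mul_distrib]
  exact Finset.sum_congr rfl fun σ _ => Finset.sum_congr rfl fun τ _ => by ring

theorem sum_sign_mul_sign_mul_prod_perm (M : Matrix n n R) (σ : Perm n) :
    ∑ τ : Perm n, ((Perm.sign σ : ℤ) : R) * (Perm.sign τ : ℤ) * ∏ k, M (σ k) (τ k) = M.det := by
  have hrows : ∑ τ : Perm n, ((Perm.sign τ : ℤ) : R) * ∏ k, M (σ k) (τ k)
      = (Perm.sign σ : ℤ) * M.det := by
    rw [← det_permute, ← det_transpose, det_apply']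
    rfl
  have hsign : ((Perm.sign σ : ℤ) : R) * (Perm.sign σ : ℤ) = 1 := by
    rw [← Int.cast_mul, ← Units.val_mul, Int.units_mul_self, Units.val_one, Int.cast_one]
  simp_rw [mul_assoc, ← Finset.mul_sum, hrows, ← mul_assoc, hsign, one_mul]

theorem sum_sum_sign_mul_sign_mul_prod_perm (M : Matrix n n R) :
    ∑ σ : Perm n, ∑ τ : Perm n,
      ((Perm.sign σ : ℤ) : R) * (Perm.sign τ : ℤ) * ∏ k, M (σ k) (τ k)
      = (Fintype.card n).factorial * M.det := by
  simp_rw [sum_sign_mul_sign_mul_prod_perm, Finset.sum_const, Finset.card_univ,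
    Fintype.card_perm, nsmul_eq_mul]

end Matrix

theorem MeasureTheory.integral_det_mul_det {ι Ω 𝕜 : Type*} [Fintype ι] [DecidableEq ι]
    [RCLike 𝕜] [MeasurableSpace Ω] (μ : Measure Ω) [SigmaFinite μ] (φ ψ : ι → Ω → 𝕜)
    (hφψ : ∀ j k, Integrable (fun t => φ j t * ψ k t) μ) :
    ∫ x : ι → Ω, (Matrix.of fun j k => φ j (x k)).det * (Matrix.of fun j k => ψ j (x k)).det
        ∂(Measure.pi fun _ => μ)
      = (Fintype.card ι).factorial * (Matrix.of fun j k => ∫ t, φ j t * ψ k t ∂μ).det := by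
  have hterm (σ τ : Perm ι) : Integrable (fun x : ι → Ω =>
      ((Perm.sign σ : ℤ) : 𝕜) * (Perm.sign τ : ℤ) * ∏ k, φ (σ k) (x k) * ψ (τ k) (x k))
      (Measure.pi fun _ => μ) :=
    (Integrable.fintype_prod fun k => hφψ (σ k) (τ k)).const_mul _
  simp_rw [Matrix.det_mul_det_eq_sum_sum_sign_mul_prod, Matrix.of_apply]
  rw [← Matrix.sum_sum_sign_mul_sign_mul_prod_perm,
    integral_finsetSum _ fun σ _ => integrable_finsetSum _ fun τ _ => hterm σ τ]
  refine Finset.sum_congr rfl fun σ _ => ?_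
  rw [integral_finsetSum _ fun τ _ => hterm σ τ]
  refine Finset.sum_congr rfl fun τ _ => ?_
  rw [integral_const_mul,
    integral_fintype_prod_eq_prod (fun k t => φ (σ k) t * ψ (τ k) t)]
  rfl

/-- Andréief's identity. -/
theorem andreief {Ω : Type*} [MeasurableSpace Ω] (μ : Measure Ω) [SigmaFinite μ]
    (N : ℕ) (φ ψ : Fin N → Ω → ℂ) (f : Ω → ℂ)
    (hφ : ∀ j, MemLp (φ j) 2 μ) (hψ : ∀ j, MemLp (ψ j) 2 μ)
    (hf : MemLp f ⊤ μ) :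
    ((N.factorial : ℂ))⁻¹ *
      ∫ x : Fin N → Ω,
        (Matrix.det (Matrix.of fun j k => φ j (x k))) *
        (Matrix.det (Matrix.of fun j k => ψ j (x k))) *
        (∏ j, f (x j)) ∂(Measure.pi fun _ => μ)
    = Matrix.det (Matrix.of fun j k => ∫ t, φ j t * ψ k t * f t ∂μ) := by
  have hint (j k : Fin N) : Integrable (fun t => φ j t * (ψ k t * f t)) μ :=
    (hφ j).integrable_mul (hf.mul' (hψ k) (r := 2))
  have hcolumns (x : Fin N → Ω) :
      (Matrix.of fun j k => ψ j (x k)).det * ∏ j, f (x j)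
        = (Matrix.of fun j k => ψ j (x k) * f (x k)).det := by
    rw [mul_comm, ← Matrix.det_mul_row]
    simp only [Matrix.of_apply, mul_comm (f _)]
  have hfact : (N.factorial : ℂ) ≠ 0 := Nat.cast_ne_zero.mpr N.factorial_ne_zero
  simp_rw [mul_assoc _ _ (∏ j, f _), hcolumns, integral_det_mul_det μ φ _ hint, Fintype.card_fin,
    ← mul_assoc]
  rw [inv_mul_cancel₀ hfact, one_mul]
end

section
/- Let p_t(x,y) = (2πt)^{-1/2} exp(-(x-y)²/(2t)) be the Gaussian heat kernel, let z_j = j-1 for 1 ≤ j ≤ N, and fix y_1 < ⋯ < y_N and S > 0. Define q_{S,T}(x;y;z) = det(p_S(y_j,x_k))_{j,k=1}^N det(p_T(x_j,z_k))_{j,k=1}^N / det(p_{S+T}(y_j,z_k))_{j,k=1}^N. Then for every x ∈ ℝ^N, lim_{T→∞} q_{S,T}(x;y;z) = (2πS)^{-N/2} · (Δ_N(x)/Δ_N(y)) · det(e^{-(x_j-y_k)²/(2S)})_{j,k=1}^N, where Δ_N(x) = ∏_{1≤i<j≤N} (x_i - x_j) is the Vandermonde determinant. -/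
/-! Because the end points are `z_k = k`, the kernel factors as
`p_t(u, k) = c_t e^{-u²/2t} · e^{-k²/2t} · (e^{u/t})^k`, so `det (p_t(u_j, k))` is a Vandermonde
determinant in the nodes `e^{u_j/t}` times row and column weights. As `T → ∞` the weights of the
`T`- and `(S+T)`-determinants have ratio tending to `1`, while each Vandermonde factor
`e^{x_j/T} - e^{x_i/T} ~ (x_j - x_i)/T` is matched by
`e^{y_j/(S+T)} - e^{y_i/(S+T)} ~ (y_j - y_i)/T`; hence the ratio of the two determinants tends
to `Δ_N(x)/Δ_N(y)`. -/

open scoped Real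

/-- Gaussian heat kernel. -/
noncomputable def heatKernel (t x y : ℝ) : ℝ :=
  (2 * π * t) ^ (-(1 : ℝ)/2) * Real.exp (-(x - y)^2 / (2 * t))

/-- Vandermonde product `∏_{i<j} (x_i - x_j)`. -/
noncomputable def vdm {N : ℕ} (x : Fin N → ℝ) : ℝ :=
  ∏ i : Fin N, ∏ j ∈ Finset.Ioi i, (x i - x j)

open Filter Topology Matrix Finset

lemma det_heatKernel {N : ℕ} {t : ℝ} (ht : 0 ≤ t) (a b : Fin N → ℝ) :
    det (of fun j k => heatKernel t (a j) (b k)) =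
      (2 * π * t) ^ (-(N : ℝ)/2) * det (of fun j k => Real.exp (-(a j - b k)^2 / (2 * t))) := by
  have hsmul : (of fun j k => heatKernel t (a j) (b k)) =
      (2 * π * t) ^ (-(1 : ℝ)/2) • of fun j k => Real.exp (-(a j - b k)^2 / (2 * t)) := rfl
  rw [hsmul, det_smul, Fintype.card_fin, ← Real.rpow_natCast, ← Real.rpow_mul (by positivity)]
  congr 2
  ring

lemma det_gaussian_swap {N : ℕ} (t : ℝ) (a b : Fin N → ℝ) :
    det (of fun j k => Real.exp (-(a j - b k)^2 / (2 * t))) =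
      det (of fun j k => Real.exp (-(b j - a k)^2 / (2 * t))) := by
  rw [← det_transpose]
  congr 1
  ext j k
  simp only [transpose_apply, of_apply]
  ring_nf

lemma det_gaussian_natCast {N : ℕ} {t : ℝ} (ht : t ≠ 0) (a : Fin N → ℝ) :
    det (of fun j k : Fin N => Real.exp (-(a j - k)^2 / (2 * t))) =
      (∏ j, Real.exp (-(a j)^2 / (2 * t))) * (∏ k : Fin N, Real.exp (-(k : ℝ)^2 / (2 * t))) *
        det (vandermonde fun j => Real.exp (a j / t)) := by
  have hM : (of fun j k : Fin N => Real.exp (-(a j - k)^2 / (2 * t))) =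
      of fun j k => Real.exp (-(a j)^2 / (2 * t)) *
        (of fun j k : Fin N => Real.exp (-(k : ℝ)^2 / (2 * t)) *
          vandermonde (fun j => Real.exp (a j / t)) j k) j k := by
    ext j k
    simp only [of_apply, vandermonde_apply]
    rw [← Real.exp_nat_mul, ← Real.exp_add, ← Real.exp_add]
    congr 1
    field_simp
    ring
  rw [hM, det_mul_column, det_mul_row _ (vandermonde _), mul_assoc]

lemma tendsto_exp_div_nhds_one {α : Type*} {l : Filter α} {f : α → ℝ}
    (hf : Tendsto f l atTop) (c : ℝ) : Tendsto (fun a => Real.exp (c / f a)) l (𝓝 1) := by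
  simpa using (tendsto_const_nhds.div_atTop hf).rexp

lemma tendsto_prod_exp_div_nhds_one {α ι : Type*} {l : Filter α} {f : α → ℝ}
    (hf : Tendsto f l atTop) (s : Finset ι) (c : ι → ℝ) :
    Tendsto (fun a => ∏ i ∈ s, Real.exp (c i / f a)) l (𝓝 1) := by
  simpa using tendsto_finsetProd s fun i _ => tendsto_exp_div_nhds_one hf (c i)

lemma tendsto_add_div_self_atTop (s : ℝ) :
    Tendsto (fun T : ℝ => (s + T) / T) atTop (𝓝 1) := by
  have h : Tendsto (fun T : ℝ => s / T + 1) atTop (𝓝 (0 + 1)) :=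
    (tendsto_const_nhds.div_atTop tendsto_id).add_const 1
  rw [zero_add] at h
  refine h.congr' ?_
  filter_upwards [eventually_ne_atTop 0] with T hT
  field_simp

lemma tendsto_mul_exp_div_sub_exp_div (a b : ℝ) :
    Tendsto (fun T : ℝ => T * (Real.exp (a / T) - Real.exp (b / T))) atTop (𝓝 (a - b)) := by
  have hexp (c : ℝ) : HasDerivAt (fun h => Real.exp (c * h)) c 0 := by
    simpa using ((hasDerivAt_id' 0).const_mul c).exp
  have hderiv := (hexp a).sub (hexp b)
  refine (hderiv.tendsto_slope_zero_right.comp tendsto_inv_atTop_nhdsGT_zero).congr fun T => ?_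
  simp [div_eq_mul_inv]

lemma tendsto_exp_sub_exp_div_exp_sub_exp (s a b c d : ℝ) (hcd : c ≠ d) :
    Tendsto (fun T : ℝ => (Real.exp (a / T) - Real.exp (b / T)) /
        (Real.exp (c / (s + T)) - Real.exp (d / (s + T)))) atTop (𝓝 ((a - b) / (c - d))) := by
  have hden := (tendsto_mul_exp_div_sub_exp_div c d).comp
    (tendsto_atTop_add_const_left atTop s tendsto_id)
  have h := ((tendsto_mul_exp_div_sub_exp_div a b).div hden (sub_ne_zero.2 hcd)).mul
    (tendsto_add_div_self_atTop s)
  rw [mul_one] at h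
  refine h.congr' ?_
  filter_upwards [eventually_gt_atTop 0, eventually_gt_atTop (-s)] with T hT hsT
  have hsT' : s + T ≠ 0 := by linarith
  have hden_ne : Real.exp (c / (s + T)) - Real.exp (d / (s + T)) ≠ 0 := by
    rw [sub_ne_zero, Ne, Real.exp_eq_exp, div_left_inj' hsT']
    exact hcd
  simp only [Pi.div_apply, Function.comp_apply, id]
  field_simp

lemma tendsto_det_vandermonde_exp_div {N : ℕ} (s : ℝ) (x y : Fin N → ℝ)
    (hy : Function.Injective y) :
    Tendsto (fun T : ℝ => det (vandermonde fun j => Real.exp (x j / T)) /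
        det (vandermonde fun j => Real.exp (y j / (s + T)))) atTop
      (𝓝 (det (vandermonde x) / det (vandermonde y))) := by
  simp only [det_vandermonde, ← prod_div_distrib]
  exact tendsto_finsetProd _ fun i _ => tendsto_finsetProd _ fun j hj =>
    tendsto_exp_sub_exp_div_exp_sub_exp s _ _ _ _ (hy.ne (mem_Ioi.1 hj).ne')

lemma det_vandermonde_div_det_vandermonde {N : ℕ} (x y : Fin N → ℝ) :
    det (vandermonde x) / det (vandermonde y) = vdm x / vdm y := by
  simp only [det_vandermonde, vdm, ← prod_div_distrib]
  refine prod_congr rfl fun i _ => prod_congr rfl fun j _ => ?_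
  rw [← neg_sub (x i), ← neg_sub (y i), neg_div_neg_eq]

lemma tendsto_det_gaussian_natCast_div {N : ℕ} (s : ℝ) (x y : Fin N → ℝ)
    (hy : Function.Injective y) :
    Tendsto (fun T : ℝ => det (of fun j k : Fin N => Real.exp (-(x j - k)^2 / (2 * T))) /
        det (of fun j k : Fin N => Real.exp (-(y j - k)^2 / (2 * (s + T))))) atTop
      (𝓝 (vdm x / vdm y)) := by
  have h2T : Tendsto (fun T : ℝ => 2 * T) atTop atTop := tendsto_id.const_mul_atTop two_pos
  have h2sT : Tendsto (fun T : ℝ => 2 * (s + T)) atTop atTop :=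
    (tendsto_atTop_add_const_left atTop s tendsto_id).const_mul_atTop two_pos
  have hrow := (tendsto_prod_exp_div_nhds_one h2T univ fun j => -(x j)^2).div
    (tendsto_prod_exp_div_nhds_one h2sT univ fun j => -(y j)^2) one_ne_zero
  have hcol := (tendsto_prod_exp_div_nhds_one h2T univ fun k : Fin N => -(k : ℝ)^2).div
    (tendsto_prod_exp_div_nhds_one h2sT univ fun k : Fin N => -(k : ℝ)^2) one_ne_zero
  have h := (hrow.mul hcol).mul (tendsto_det_vandermonde_exp_div s x y hy)
  simp only [div_one, mul_one, one_mul] at h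
  rw [← det_vandermonde_div_det_vandermonde]
  refine h.congr' ?_
  filter_upwards [eventually_gt_atTop 0, eventually_gt_atTop (-s)] with T hT hsT
  simp only [Pi.div_apply]
  rw [det_gaussian_natCast hT.ne', det_gaussian_natCast (by linarith : s + T ≠ 0),
    mul_div_mul_comm, mul_div_mul_comm]

lemma tendsto_rpow_div_rpow_add_atTop (s p : ℝ) :
    Tendsto (fun T : ℝ => (2 * π * T) ^ p / (2 * π * (s + T)) ^ p) atTop (𝓝 1) := by
  have h := ((tendsto_add_div_self_atTop s).inv₀ one_ne_zero).rpow_const (p := p)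
    (Or.inl (by norm_num))
  rw [inv_one, Real.one_rpow] at h
  refine h.congr' ?_
  filter_upwards [eventually_gt_atTop 0, eventually_gt_atTop (-s)] with T hT hsT
  rw [inv_div, ← mul_div_mul_left T (s + T) (by positivity : 2 * π ≠ 0),
    Real.div_rpow (by positivity) (by nlinarith [Real.pi_pos])]

theorem tendsto_qST_general {N : ℕ} (S : ℝ) (hS : 0 < S)
    (y : Fin N → ℝ) (hy : StrictMono y) (x : Fin N → ℝ) :
    Filter.Tendsto (fun T : ℝ =>
        (Matrix.det (Matrix.of fun j k => heatKernel S (y j) (x k)) *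
         Matrix.det (Matrix.of fun j k => heatKernel T (x j) (k : ℝ))) /
        Matrix.det (Matrix.of fun j k => heatKernel (S + T) (y j) (k : ℝ)))
      Filter.atTop
      (nhds ((2 * π * S) ^ (-(N : ℝ)/2) * (vdm x / vdm y) *
        Matrix.det (Matrix.of fun j k => Real.exp (-(x j - y k)^2 / (2 * S))))) := by
  set D := det (of fun j k => Real.exp (-(x j - y k)^2 / (2 * S)))
  have h := ((tendsto_rpow_div_rpow_add_atTop S (-(N : ℝ)/2)).mul
    (tendsto_det_gaussian_natCast_div S x y hy.injective)).const_mul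
      ((2 * π * S) ^ (-(N : ℝ)/2) * D)
  rw [one_mul, mul_right_comm _ D] at h
  refine h.congr' ?_
  filter_upwards [eventually_gt_atTop 0] with T hT
  rw [det_heatKernel hS.le, det_heatKernel hT.le, det_heatKernel (by linarith),
    det_gaussian_swap S y x]
  ring

/-- Limit of the conditional non-intersecting Brownian motion density as `T → ∞`. -/
theorem tendsto_qST {N : ℕ} (hN : 1 ≤ N) (S : ℝ) (hS : 0 < S)
    (y : Fin N → ℝ) (hy : StrictMono y) (x : Fin N → ℝ) :
    Filter.Tendsto (fun T : ℝ =>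
        (Matrix.det (Matrix.of fun j k => heatKernel S (y j) (x k)) *
         Matrix.det (Matrix.of fun j k => heatKernel T (x j) (k : ℝ))) /
        Matrix.det (Matrix.of fun j k => heatKernel (S + T) (y j) (k : ℝ)))
      Filter.atTop
      (nhds ((2 * π * S) ^ (-(N : ℝ)/2) * (vdm x / vdm y) *
        Matrix.det (Matrix.of fun j k => Real.exp (-(x j - y k)^2 / (2 * S))))) :=
  tendsto_qST_general S hS y hy x
end

section
/- Let a > 0, |u| < √(1+4a²), write u = √(1+4a²)cos θ_c, θ_c ∈ (0,π), z_c^± = S(√(1+4a²)e^{±iθ_c}) with S(w)=(w+1/w)/2, and ρ(u) = (2/(π(1+4a²)))√(1+4a²-u²). Then z_c^±/(a² ρ(u)) = π((1+2a²)/(2a²)) cot θ_c ± πi. In particular Im(z_c^+/(a²ρ(u))) = π. -/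
/-!
Write `R = √(1+4a²)`. On the circle `|w| = R` the Joukowski map gives
`z_c^± = ((R + R⁻¹)/2) cos θ_c ± i ((R - R⁻¹)/2) sin θ_c`, while `u = R cos θ_c` makes
`ρ(u) = 2 sin θ_c / (π R)`. Dividing, the imaginary part is `π (R² - 1) / (4a²) = π`
and the real part is `π (R² + 1) / (4a²) · cot θ_c`.
-/

open scoped Real
open Complex

theorem joukowski_circle (r θ : ℝ) :
    ((r : ℂ) * exp (I * θ) + exp (-(I * θ)) / r) / 2
      = (((r + r⁻¹) / 2 * Real.cos θ : ℝ) : ℂ) + (((r - r⁻¹) / 2 * Real.sin θ : ℝ) : ℂ) * I := by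
  have hexp : exp (I * θ) = Real.cos θ + Real.sin θ * I := by
    rw [mul_comm, exp_mul_I, ← ofReal_cos, ← ofReal_sin]
  have hexp_neg : exp (-(I * θ)) = Real.cos θ - Real.sin θ * I := by
    rw [← mul_neg, ← ofReal_neg, mul_comm, exp_mul_I, ← ofReal_cos, ← ofReal_sin,
      Real.cos_neg, Real.sin_neg]
    push_cast; ring
  rw [hexp, hexp_neg]
  push_cast
  ring

theorem joukowski_circle_conj (r θ : ℝ) :
    ((r : ℂ) * exp (-(I * θ)) + exp (I * θ) / r) / 2
      = (((r + r⁻¹) / 2 * Real.cos θ : ℝ) : ℂ) - (((r - r⁻¹) / 2 * Real.sin θ : ℝ) : ℂ) * I := by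
  have h := joukowski_circle r (-θ)
  simp only [ofReal_neg, mul_neg, neg_neg, Real.cos_neg, Real.sin_neg] at h
  rw [h]
  push_cast
  ring

theorem sqrt_sq_sub_mul_cos_sq {R θ : ℝ} (hR : 0 ≤ R) (hθ : θ ∈ Set.Icc 0 π) :
    Real.sqrt (R ^ 2 - (R * Real.cos θ) ^ 2) = R * Real.sin θ := by
  rw [← Real.sqrt_sq (mul_nonneg hR (Real.sin_nonneg_of_mem_Icc hθ))]
  congr 1
  linear_combination -R ^ 2 * Real.sin_sq_add_cos_sq θ

theorem semicircle_density_cos {R θ : ℝ} (hR : 0 < R) (hθ : θ ∈ Set.Icc 0 π) :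
    2 / (π * R ^ 2) * Real.sqrt (R ^ 2 - (R * Real.cos θ) ^ 2) = 2 * Real.sin θ / (π * R) := by
  rw [sqrt_sq_sub_mul_cos_sq hR.le hθ]
  field_simp

section JoukowskiOverDensity

variable {a R θ : ℝ} (hR : R ^ 2 = 1 + 4 * a ^ 2) (ha : a ≠ 0) (hθ : Real.sin θ ≠ 0)
include hR ha hθ

theorem joukowski_re_div_density (hR0 : R ≠ 0) :
    (R + R⁻¹) / 2 * Real.cos θ / (a ^ 2 * (2 * Real.sin θ / (π * R)))
      = π * ((1 + 2 * a ^ 2) / (2 * a ^ 2)) * (Real.cos θ / Real.sin θ) := by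
  field_simp
  linear_combination Real.cos θ * hR

theorem joukowski_im_div_density (hR0 : R ≠ 0) :
    (R - R⁻¹) / 2 * Real.sin θ / (a ^ 2 * (2 * Real.sin θ / (π * R))) = π := by
  field_simp
  linear_combination hR

end JoukowskiOverDensity

theorem critical_point_identity_general (a : ℝ) (ha : 0 < a) (θc : ℝ)
    (hθc : θc ∈ Set.Ioo 0 Real.pi)
    (u : ℝ) (hu : u = Real.sqrt (1 + 4 * a^2) * Real.cos θc)
    (ρu : ℝ) (hρ : ρu = (2 / (π * (1 + 4 * a^2))) * Real.sqrt (1 + 4 * a^2 - u^2))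
    (zcp zcm : ℂ)
    (hzp : zcp = ((Real.sqrt (1 + 4 * a^2) : ℂ) * Complex.exp (I * θc)
        + Complex.exp (-(I * θc)) / (Real.sqrt (1 + 4 * a^2) : ℂ)) / 2)
    (hzm : zcm = ((Real.sqrt (1 + 4 * a^2) : ℂ) * Complex.exp (-(I * θc))
        + Complex.exp (I * θc) / (Real.sqrt (1 + 4 * a^2) : ℂ)) / 2) :
    zcp / ((a : ℂ)^2 * (ρu : ℂ))
      = ((π * ((1 + 2 * a^2) / (2 * a^2)) * (Real.cos θc / Real.sin θc) : ℝ) : ℂ)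
        + π * I
    ∧ zcm / ((a : ℂ)^2 * (ρu : ℂ))
      = ((π * ((1 + 2 * a^2) / (2 * a^2)) * (Real.cos θc / Real.sin θc) : ℝ) : ℂ)
        - π * I
    ∧ (zcp / ((a : ℂ)^2 * (ρu : ℂ))).im = π := by
  set R := Real.sqrt (1 + 4 * a ^ 2)
  have hR2 : R ^ 2 = 1 + 4 * a ^ 2 := Real.sq_sqrt (by positivity)
  have hR : 0 < R := Real.sqrt_pos.mpr (by positivity)
  have hsin : Real.sin θc ≠ 0 := (Real.sin_pos_of_pos_of_lt_pi hθc.1 hθc.2).ne'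
  have hρR : ρu = 2 * Real.sin θc / (π * R) := by
    rw [hρ, hu, ← hR2, semicircle_density_cos hR (Set.Ioo_subset_Icc_self hθc)]
  have hden : (a : ℂ) ^ 2 * ρu = ((a ^ 2 * ρu : ℝ) : ℂ) := by push_cast; rfl
  have hplus : zcp / ((a : ℂ) ^ 2 * ρu)
      = ((π * ((1 + 2 * a ^ 2) / (2 * a ^ 2)) * (Real.cos θc / Real.sin θc) : ℝ) : ℂ) + π * I := by
    rw [hzp, joukowski_circle, hden, add_div, mul_div_right_comm, ← ofReal_div, ← ofReal_div, hρR,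
      joukowski_re_div_density hR2 ha.ne' hsin hR.ne', joukowski_im_div_density hR2 ha.ne' hsin hR.ne']
  refine ⟨hplus, ?_, by simp only [hplus, add_im, ofReal_im, mul_I_im, ofReal_re, zero_add]⟩
  rw [hzm, joukowski_circle_conj, hden, sub_div, mul_div_right_comm, ← ofReal_div, ← ofReal_div, hρR,
    joukowski_re_div_density hR2 ha.ne' hsin hR.ne', joukowski_im_div_density hR2 ha.ne' hsin hR.ne']

/-- With `z_c^± = S(√(1+4a²)e^{±iθ_c})` and `ρ(u)` the semicircle density,
`z_c^±/(a²ρ(u)) = π((1+2a²)/(2a²)) cot θ_c ± πi`; in particular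
`Im(z_c^+/(a²ρ(u))) = π`. -/
theorem critical_point_identity (a : ℝ) (ha : 0 < a) (θc : ℝ)
    (hθc : θc ∈ Set.Ioo 0 Real.pi)
    (u : ℝ) (hu : u = Real.sqrt (1 + 4 * a^2) * Real.cos θc)
    (hu' : |u| < Real.sqrt (1 + 4 * a^2))
    (ρu : ℝ) (hρ : ρu = (2 / (π * (1 + 4 * a^2))) * Real.sqrt (1 + 4 * a^2 - u^2))
    (zcp zcm : ℂ)
    (hzp : zcp = ((Real.sqrt (1 + 4 * a^2) : ℂ) * Complex.exp (I * θc)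
        + Complex.exp (-(I * θc)) / (Real.sqrt (1 + 4 * a^2) : ℂ)) / 2)
    (hzm : zcm = ((Real.sqrt (1 + 4 * a^2) : ℂ) * Complex.exp (-(I * θc))
        + Complex.exp (I * θc) / (Real.sqrt (1 + 4 * a^2) : ℂ)) / 2) :
    zcp / ((a : ℂ)^2 * (ρu : ℂ))
      = ((π * ((1 + 2 * a^2) / (2 * a^2)) * (Real.cos θc / Real.sin θc) : ℝ) : ℂ)
        + π * I
    ∧ zcm / ((a : ℂ)^2 * (ρu : ℂ))
      = ((π * ((1 + 2 * a^2) / (2 * a^2)) * (Real.cos θc / Real.sin θc) : ℝ) : ℂ)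
        - π * I
    ∧ (zcp / ((a : ℂ)^2 * (ρu : ℂ))).im = π :=
  critical_point_identity_general a ha θc hθc u hu ρu hρ zcp zcm hzp hzm
end

section
/- Let (R_m)_{m≥1} be continuous symmetric translation-invariant functions R_m : ℝ^m → ℝ such that for each s ≥ 0, Σ_{m≥1} (s^m/m!) sup_{|σ_j|≤s} |R_m(σ)| < ∞. Define H(s) = Σ_{m=0}^∞ ((−1)^m/m!) ∫_{[0,s]^m} R_m(σ) d^mσ. Then H is differentiable with H'(u) = Σ_{m=1}^∞ ((−1)^m/(m−1)!) ∫_{[0,u]^{m-1}} R_m(0, x_2, …, x_m) d^{m-1}x. -/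
open MeasureTheory Set

namespace GapAux


def Qc (k : ℕ) (s : ℝ) : Set (Fin k → ℝ) := Set.univ.pi fun _ => Set.Icc 0 s

lemma measurableSet_Qc (k : ℕ) (s : ℝ) : MeasurableSet (Qc k s) :=
  MeasurableSet.univ_pi fun _ => measurableSet_Icc

lemma volume_coord_eq_const (k : ℕ) (i : Fin k) (c : ℝ) :
    volume {σ : Fin k → ℝ | σ i = c} = 0 := by
  have : {σ : Fin k → ℝ | σ i = c} = Set.univ.pi (fun j => if j = i then {c} else Set.univ) := by
    ext σ
    simp only [mem_setOf_eq, mem_pi, mem_univ, forall_true_left]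
    constructor
    · intro h j
      by_cases hj : j = i <;> simp [hj, h]
    · intro h
      have := h i
      simpa using this
  rw [this, volume_pi, Measure.pi_pi]
  exact Finset.prod_eq_zero (Finset.mem_univ i) (by simp)

lemma continuous_cube_integral {k : ℕ} (f : (Fin k → ℝ) → ℝ) (hf : Continuous f) :
    Continuous fun t : ℝ => ∫ x in Qc k t, f x := by
  rw [continuous_iff_continuousAt]
  intro t0
  have hmeas : ∀ t : ℝ, MeasurableSet (Qc k t) := fun t => measurableSet_Qc k t
  have hrw : ∀ t : ℝ, (∫ x in Qc k t, f x) = ∫ x, (Qc k t).indicator f x := by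
    intro t; rw [integral_indicator (hmeas t)]
  simp only [ContinuousAt, hrw]
  apply MeasureTheory.tendsto_integral_filter_of_dominated_convergence
    (bound := (Qc k (|t0| + 1)).indicator fun x => |f x|)
  · exact Filter.Eventually.of_forall fun t =>
      ((hf.aestronglyMeasurable).indicator (hmeas t))
  · have hev : ∀ᶠ t : ℝ in nhds t0, t ≤ |t0| + 1 := by
      have h1 : t0 < |t0| + 1 := lt_of_le_of_lt (le_abs_self t0) (by linarith)
      exact (eventually_lt_nhds h1).mono fun t ht => ht.le
    filter_upwards [hev] with t ht
    refine Filter.Eventually.of_forall fun x => ?_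
    by_cases hx : x ∈ Qc k t
    · have hx' : x ∈ Qc k (|t0| + 1) := by
        intro i _
        have := hx i (mem_univ i)
        exact ⟨this.1, this.2.trans ht⟩
      rw [Set.indicator_of_mem hx, Set.indicator_of_mem hx']
      exact le_of_eq (Real.norm_eq_abs _)
    · rw [Set.indicator_of_notMem hx]
      simp only [norm_zero]
      exact Set.indicator_apply_nonneg fun _ => abs_nonneg _
  · rw [integrable_indicator_iff (measurableSet_Qc _ _)]
    exact (hf.abs.continuousOn).integrableOn_compact (isCompact_univ_pi fun _ => isCompact_Icc)
  · have hnull : volume (⋃ i : Fin k, {σ : Fin k → ℝ | σ i = t0}) = 0 :=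
      measure_iUnion_null fun i => volume_coord_eq_const k i t0
    filter_upwards [measure_eq_zero_iff_ae_notMem.mp hnull] with x hx
    simp only [mem_iUnion, mem_setOf_eq, not_exists] at hx
    by_cases hmem : ∀ i, 0 ≤ x i ∧ x i < t0
    · have hx0 : x ∈ Qc k t0 := fun i _ => ⟨(hmem i).1, (hmem i).2.le⟩
      have h1 : ∀ᶠ t : ℝ in nhds t0, x ∈ Qc k t := by
        have h2 : ∀ᶠ t : ℝ in nhds t0, ∀ i, x i < t := by
          rw [Filter.eventually_all]
          exact fun i => eventually_gt_nhds (hmem i).2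
        filter_upwards [h2] with t ht i _
        exact ⟨(hmem i).1, (ht i).le⟩
      rw [Set.indicator_of_mem hx0]
      exact Filter.Tendsto.congr'
        (h1.mono fun t ht => (Set.indicator_of_mem ht f).symm) tendsto_const_nhds
    · push_neg at hmem
      obtain ⟨i, hi⟩ := hmem
      have hout : ∀ᶠ t : ℝ in nhds t0, x ∉ Qc k t := by
        rcases lt_or_ge (x i) 0 with h0 | h0
        · exact Filter.Eventually.of_forall fun t hxt =>
            absurd (hxt i (mem_univ i)).1 (not_le.2 h0)
        · have hgt : t0 < x i := lt_of_le_of_ne (hi h0) (Ne.symm (hx i))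
          filter_upwards [eventually_lt_nhds hgt] with t ht hxt
          exact absurd (hxt i (mem_univ i)).2 (not_le.2 ht)
      have hx0 : x ∉ Qc k t0 := by
        intro hxt
        rcases lt_or_ge (x i) 0 with h0 | h0
        · exact absurd (hxt i (mem_univ i)).1 (not_le.2 h0)
        · exact absurd (hxt i (mem_univ i)).2
            (not_le.2 (lt_of_le_of_ne (hi h0) (Ne.symm (hx i))))
      rw [Set.indicator_of_notMem hx0]
      exact Filter.Tendsto.congr'
        (hout.mono fun t ht => (Set.indicator_of_notMem ht f).symm) tendsto_const_nhds
lemma isCompact_Qc (k : ℕ) (s : ℝ) : IsCompact (Qc k s) :=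
  isCompact_univ_pi fun _ => isCompact_Icc

lemma volume_eq_coord_zero (m : ℕ) (i j : Fin m) (hij : i ≠ j) :
    volume {σ : Fin m → ℝ | σ i = σ j} = 0 := by
  have : {σ : Fin m → ℝ | σ i = σ j}
      = (LinearMap.ker ((LinearMap.proj i : (Fin m → ℝ) →ₗ[ℝ] ℝ) - LinearMap.proj j) : Set (Fin m → ℝ)) := by
    ext σ
    simp [LinearMap.mem_ker, sub_eq_zero]
  rw [this]
  apply Measure.addHaar_submodule
  intro h
  have h1 : (Pi.single i 1 : Fin m → ℝ) ∈ LinearMap.ker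
      ((LinearMap.proj i : (Fin m → ℝ) →ₗ[ℝ] ℝ) - LinearMap.proj j) := h ▸ Submodule.mem_top
  simp [LinearMap.mem_ker, Pi.single_apply, hij, hij.symm, sub_eq_zero] at h1

lemma cube_integral_eq {k : ℕ} (R : (Fin (k + 1) → ℝ) → ℝ) (hcont : Continuous R)
    (hsymm : ∀ (σ : Fin (k+1) → ℝ) (π : Equiv.Perm (Fin (k+1))), R (σ ∘ π) = R σ)
    (htrans : ∀ (σ : Fin (k+1) → ℝ) (c : ℝ), R (fun i => σ i + c) = R σ)
    (s : ℝ) (hs : 0 ≤ s) :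
    ∫ σ in Qc (k+1) s, R σ
      = (k + 1 : ℝ) * ∫ t in (0:ℝ)..s, ∫ x in Qc k t, R (Fin.cons 0 x) := by
  classical
  set S : Fin (k+1) → Set (Fin (k+1) → ℝ) := fun l => {σ | ∀ i, i ≠ l → σ l < σ i} with hS
  have hSmeas : ∀ l, MeasurableSet (S l) := by
    intro l
    have : S l = ⋂ i, ⋂ (_ : i ≠ l), {σ : Fin (k+1) → ℝ | σ l < σ i} := by
      ext σ; simp [hS]
    rw [this]
    exact MeasurableSet.iInter fun i => MeasurableSet.iInter fun _ =>
      measurableSet_lt (measurable_pi_apply l) (measurable_pi_apply i)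
  have hSdisj : Pairwise (Function.onFun Disjoint fun l => Qc (k+1) s ∩ S l) := by
    intro l l' hll'
    refine Set.disjoint_left.2 fun σ h1 h2 => ?_
    exact absurd (h2.2 l hll') (not_lt.2 (h1.2 l' hll'.symm).le)
  have hRint : IntegrableOn R (Qc (k+1) s) volume :=
    hcont.continuousOn.integrableOn_compact (isCompact_Qc _ _)
  -- null set of ties
  have hnull : volume (⋃ p : Fin (k+1) × Fin (k+1),
      {σ : Fin (k+1) → ℝ | p.1 ≠ p.2 ∧ σ p.1 = σ p.2}) = 0 := by
    refine measure_iUnion_null fun p => ?_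
    by_cases hp : p.1 = p.2
    · simp [hp]
    · exact measure_mono_null (fun σ hσ => hσ.2) (volume_eq_coord_zero _ _ _ hp)
  -- step a
  have ha : ∫ σ in Qc (k+1) s, R σ = ∫ σ in Qc (k+1) s ∩ ⋃ l, S l, R σ := by
    refine (setIntegral_congr_set ?_).symm
    rw [MeasureTheory.ae_eq_set]
    constructor
    · rw [Set.diff_eq_empty.2 Set.inter_subset_left]
      exact measure_empty
    · rw [Set.diff_self_inter]
      refine measure_mono_null ?_ hnull
      rintro σ ⟨hσQ, hσS⟩
      obtain ⟨l₀, -, hmin⟩ := Finset.exists_min_image Finset.univ σ ⟨0, Finset.mem_univ 0⟩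
      rw [Set.mem_iUnion] at hσS
      push_neg at hσS
      have := hσS l₀
      rw [hS] at this
      simp only [mem_setOf_eq, not_forall] at this
      obtain ⟨i, hil, hle⟩ := this
      rw [Set.mem_iUnion]
      refine ⟨(i, l₀), hil, le_antisymm (not_lt.1 hle) (hmin i (Finset.mem_univ i))⟩
  -- step b
  have hb : ∫ σ in Qc (k+1) s ∩ ⋃ l, S l, R σ
      = ∑ l : Fin (k+1), ∫ σ in Qc (k+1) s ∩ S l, R σ := by
    rw [Set.inter_iUnion, integral_iUnion (fun l => (measurableSet_Qc _ _).inter (hSmeas l))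
      hSdisj (hRint.mono_set (Set.iUnion_subset fun l => Set.inter_subset_left))]
    exact tsum_fintype _
  -- step c
  have hc : ∀ l, ∫ σ in Qc (k+1) s ∩ S l, R σ = ∫ σ in Qc (k+1) s ∩ S 0, R σ := by
    intro l
    set e : Equiv.Perm (Fin (k+1)) := Equiv.swap 0 l with he
    set T := (MeasurableEquiv.piCongrLeft (fun _ : Fin (k+1) => ℝ) e).symm with hT
    have hTapp : ∀ (σ : Fin (k+1) → ℝ) (a : Fin (k+1)), T σ a = σ (e a) := by
      intro σ a
      rw [hT]
      exact Equiv.piCongrLeft_symm_apply (fun _ => ℝ) e σ a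
    have hmp : MeasurePreserving T volume volume :=
      (volume_measurePreserving_piCongrLeft (fun _ : Fin (k+1) => ℝ) e).symm
        (MeasurableEquiv.piCongrLeft (fun _ : Fin (k+1) => ℝ) e)
    have hee : ∀ i, e (e i) = i := fun i => Equiv.swap_apply_self _ _ i
    have hel : e l = 0 := Equiv.swap_apply_right 0 l
    have he0 : e 0 = l := Equiv.swap_apply_left 0 l
    have hpre : T ⁻¹' (Qc (k+1) s ∩ S l) = Qc (k+1) s ∩ S 0 := by
      ext σ
      simp only [Set.mem_preimage, Set.mem_inter_iff]
      constructor
      · rintro ⟨hQ, hSl⟩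
        constructor
        · intro i _
          have := hQ (e.symm i) (Set.mem_univ _)
          rwa [hTapp, Equiv.apply_symm_apply] at this
        · intro i hi0
          have hei : e i ≠ l := by
            intro hcon
            apply hi0
            have : e (e i) = e l := congrArg e hcon
            rwa [hee, hel] at this
          have h2 := hSl (e i) hei
          rwa [hTapp, hTapp, hel, hee] at h2
      · rintro ⟨hQ, hS0⟩
        constructor
        · intro i _
          rw [hTapp]
          exact hQ (e i) (Set.mem_univ _)
        · intro i hil
          have hei : e i ≠ 0 := by
            intro hcon
            apply hil
            have : e (e i) = e 0 := congrArg e hcon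
            rwa [hee, he0] at this
          have h2 := hS0 (e i) hei
          rw [hTapp, hTapp, hel]; exact h2
    calc ∫ σ in Qc (k+1) s ∩ S l, R σ
        = ∫ σ in T ⁻¹' (Qc (k+1) s ∩ S l), R (T σ) := by
          rw [hmp.setIntegral_preimage_emb (MeasurableEquiv.measurableEmbedding _)]
      _ = ∫ σ in Qc (k+1) s ∩ S 0, R σ := by
          rw [hpre]
          refine setIntegral_congr_fun ((measurableSet_Qc _ _).inter (hSmeas 0)) fun σ _ => ?_
          have : T σ = σ ∘ e := funext fun a => hTapp σ a
          rw [this, hsymm]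
  -- step d: Fubini + translation
  have hconsCont : Continuous (fun p : ℝ × (Fin k → ℝ) => R (Fin.cons p.1 p.2)) := by
    apply hcont.comp
    apply continuous_pi
    intro i
    refine Fin.cases ?_ ?_ i
    · exact continuous_fst
    · intro j
      exact (continuous_apply j).comp continuous_snd
  set F : ℝ × (Fin k → ℝ) → ℝ := fun p => R (Fin.cons p.1 p.2) with hF
  set B : Set (ℝ × (Fin k → ℝ)) := {p | p.1 ∈ Icc (0:ℝ) s ∧ ∀ j, p.2 j ∈ Ioc p.1 s} with hBdef
  have hBmeas : MeasurableSet B := by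
    have h1 : MeasurableSet {p : ℝ × (Fin k → ℝ) | p.1 ∈ Icc (0:ℝ) s} :=
      measurable_fst measurableSet_Icc
    have h2 : ∀ j : Fin k, MeasurableSet {p : ℝ × (Fin k → ℝ) | p.2 j ∈ Ioc p.1 s} := by
      intro j
      have heq : {p : ℝ × (Fin k → ℝ) | p.2 j ∈ Ioc p.1 s}
          = {p : ℝ × (Fin k → ℝ) | p.1 < p.2 j} ∩ {p | p.2 j ≤ s} := by
        ext p; simp [Set.mem_Ioc]
      rw [heq]
      have hm2 : Measurable fun p : ℝ × (Fin k → ℝ) => p.2 j :=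
        (measurable_pi_apply j).comp measurable_snd
      have hm1 : Measurable fun p : ℝ × (Fin k → ℝ) => p.1 := measurable_fst
      exact (measurableSet_lt hm1 hm2).inter (measurableSet_le hm2 measurable_const)
    have heq : B = {p : ℝ × (Fin k → ℝ) | p.1 ∈ Icc (0:ℝ) s}
        ∩ ⋂ j, {p : ℝ × (Fin k → ℝ) | p.2 j ∈ Ioc p.1 s} := by
      ext p; simp [hBdef]
    rw [heq]
    exact h1.inter (MeasurableSet.iInter h2)
  have hsymmapp : ∀ p : ℝ × (Fin k → ℝ),
      (MeasurableEquiv.piFinSuccAbove (fun _ : Fin (k+1) => ℝ) 0).symm p = Fin.cons p.1 p.2 := by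
    intro p
    show Fin.insertNthEquiv (fun _ => ℝ) 0 (p.1, p.2) = _
    rw [Fin.insertNthEquiv_zero]
    rfl
  have hpre2 : (MeasurableEquiv.piFinSuccAbove (fun _ : Fin (k+1) => ℝ) 0).symm ⁻¹'
      (Qc (k+1) s ∩ S 0) = B := by
    ext p
    rw [Set.mem_preimage, hsymmapp]
    constructor
    · rintro ⟨hQ, hS0⟩
      have ht : p.1 ∈ Icc (0:ℝ) s := by
        have := hQ 0 (mem_univ _)
        simpa using this
      refine ⟨ht, fun j => ?_⟩
      have h1 := hQ j.succ (mem_univ _)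
      have h2 := hS0 j.succ (Fin.succ_ne_zero j)
      rw [Fin.cons_succ] at h1
      rw [Fin.cons_zero, Fin.cons_succ] at h2
      exact ⟨h2, h1.2⟩
    · rintro ⟨ht, hx⟩
      constructor
      · intro i _
        induction i using Fin.cases with
        | zero => simpa using ht
        | succ j =>
          rw [Fin.cons_succ]
          exact ⟨ht.1.trans (hx j).1.le, (hx j).2⟩
      · intro i hi
        rw [Fin.cons_zero]
        induction i using Fin.cases with
        | zero => exact absurd rfl hi
        | succ j =>
          rw [Fin.cons_succ]
          exact (hx j).1
  have hFint : IntegrableOn F B volume := by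
    refine ((hconsCont.continuousOn).integrableOn_compact
      ((isCompact_Icc (a := (0:ℝ)) (b := s)).prod (isCompact_Qc k s))).mono_set ?_
    rintro p ⟨ht, hx⟩
    exact ⟨ht, fun j _ => ⟨ht.1.trans (hx j).1.le, (hx j).2⟩⟩
  have hd1 : ∫ σ in Qc (k+1) s ∩ S 0, R σ = ∫ p in B, F p := by
    have hmp2 := (volume_preserving_piFinSuccAbove (fun _ : Fin (k+1) => ℝ) 0).symm
      (MeasurableEquiv.piFinSuccAbove (fun _ : Fin (k+1) => ℝ) 0)
    have h := hmp2.setIntegral_preimage_emb (MeasurableEquiv.measurableEmbedding _)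
      R (Qc (k+1) s ∩ S 0)
    rw [hpre2] at h
    rw [← h]
    refine setIntegral_congr_fun hBmeas fun p _ => ?_
    rw [hsymmapp]
  have hd2 : ∫ p in B, F p = ∫ t : ℝ, ∫ x : Fin k → ℝ, B.indicator F (t, x) := by
    rw [← integral_indicator hBmeas]
    have hint : Integrable (B.indicator F)
        ((volume : Measure ℝ).prod (volume : Measure (Fin k → ℝ))) := by
      rw [← Measure.volume_eq_prod, integrable_indicator_iff hBmeas]
      exact hFint
    rw [Measure.volume_eq_prod]
    exact integral_prod _ hint
  have hd3 : ∀ t : ℝ, (∫ x : Fin k → ℝ, B.indicator F (t, x))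
      = (Icc (0:ℝ) s).indicator
        (fun t => ∫ x in Set.univ.pi fun _ : Fin k => Ioc t s, F (t, x)) t := by
    intro t
    by_cases ht : t ∈ Icc (0:ℝ) s
    · rw [Set.indicator_of_mem ht,
        ← integral_indicator (MeasurableSet.univ_pi fun _ => measurableSet_Ioc)]
      congr 1
      funext x
      by_cases hx : x ∈ Set.univ.pi fun _ : Fin k => Ioc t s
      · rw [Set.indicator_of_mem hx, Set.indicator_of_mem]
        exact ⟨ht, fun j => hx j (mem_univ j)⟩
      · rw [Set.indicator_of_notMem hx, Set.indicator_of_notMem]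
        intro hB
        exact hx fun j _ => hB.2 j
    · have hz : ∀ x : Fin k → ℝ, B.indicator F (t, x) = 0 := by
        intro x
        apply Set.indicator_of_notMem
        intro hB
        exact ht hB.1
      rw [Set.indicator_of_notMem ht]
      simp [hz]
  -- step e : translation of inner integral
  have he1 : ∀ t : ℝ, (∫ x in Set.univ.pi fun _ : Fin k => Ioc t s, F (t, x))
      = ∫ x in Qc k (s - t), R (Fin.cons 0 x) := by
    intro t
    have hmp3 : MeasurePreserving (fun x : Fin k → ℝ => x + fun _ => t) volume volume :=
      measurePreserving_add_right volume _
    have hemb : MeasurableEmbedding (fun x : Fin k → ℝ => x + fun _ => t) :=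
      (MeasurableEquiv.addRight (fun _ : Fin k => t)).measurableEmbedding
    have h := hmp3.setIntegral_preimage_emb hemb (fun x => F (t, x))
      (Set.univ.pi fun _ : Fin k => Ioc t s)
    rw [← h]
    have hpre3 : (fun x : Fin k → ℝ => x + fun _ => t) ⁻¹'
        (Set.univ.pi fun _ : Fin k => Ioc t s)
        = Set.univ.pi fun _ : Fin k => Ioc (0:ℝ) (s - t) := by
      ext x
      simp only [Set.mem_preimage, Set.mem_pi, mem_univ, forall_true_left, Pi.add_apply,
        Set.mem_Ioc]
      constructor
      · intro h j
        exact ⟨by linarith [(h j).1], by linarith [(h j).2]⟩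
      · intro h j
        exact ⟨by linarith [(h j).1], by linarith [(h j).2]⟩
    rw [hpre3]
    have hIcc : ∫ x in Set.univ.pi fun _ : Fin k => Ioc (0:ℝ) (s - t),
        F (t, x + fun _ => t) = ∫ x in Qc k (s - t), F (t, x + fun _ => t) := by
      refine setIntegral_congr_set ?_
      show (Set.univ.pi fun _ : Fin k => Ioc (0:ℝ) (s - t)) =ᵐ[volume]
        Set.univ.pi fun _ : Fin k => Icc (0:ℝ) (s - t)
      rw [volume_pi, Set.pi_univ_Icc]
      exact MeasureTheory.Measure.univ_pi_Ioc_ae_eq_Icc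
    rw [hIcc]
    refine setIntegral_congr_fun (measurableSet_Qc _ _) fun x _ => ?_
    have hcons : (Fin.cons t (x + fun _ => t) : Fin (k+1) → ℝ) = fun i => (Fin.cons (0:ℝ) x : Fin (k+1) → ℝ) i + t := by
      funext i
      induction i using Fin.cases with
      | zero => simp
      | succ j => simp
    show R (Fin.cons t (x + fun _ => t)) = R (Fin.cons 0 x)
    rw [hcons, htrans]
  -- step f : outer integral
  have hd : ∫ σ in Qc (k+1) s ∩ S 0, R σ
      = ∫ t in (0:ℝ)..s, ∫ x in Qc k t, R (Fin.cons 0 x) := by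
    rw [hd1, hd2]
    have : (fun t : ℝ => ∫ x : Fin k → ℝ, B.indicator F (t, x))
        = fun t => (Icc (0:ℝ) s).indicator
          (fun t => ∫ x in Set.univ.pi fun _ : Fin k => Ioc t s, F (t, x)) t :=
      funext hd3
    rw [this, integral_indicator measurableSet_Icc]
    have : (fun t : ℝ => ∫ x in Set.univ.pi fun _ : Fin k => Ioc t s, F (t, x))
        = fun t => ∫ x in Qc k (s - t), R (Fin.cons 0 x) := funext he1
    rw [this, MeasureTheory.integral_Icc_eq_integral_Ioc, ← intervalIntegral.integral_of_le hs]
    have hcs := intervalIntegral.integral_comp_sub_left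
      (a := (0:ℝ)) (b := s) (fun r => ∫ x in Qc k r, R (Fin.cons 0 x)) s
    rw [sub_self, sub_zero] at hcs
    exact hcs
  rw [ha, hb, Finset.sum_congr rfl (fun l _ => hc l), Finset.sum_const, Finset.card_univ,
    Fintype.card_fin, hd, nsmul_eq_mul]
  push_cast
  ring
lemma volume_Qc (k : ℕ) (s : ℝ) (hs : 0 ≤ s) : volume (Qc k s) = ENNReal.ofReal (s ^ k) := by
  rw [Qc, volume_pi, Measure.pi_pi]
  simp [Real.volume_Icc, ← ENNReal.ofReal_pow hs]

lemma continuous_consR {k : ℕ} (R : (Fin (k+1) → ℝ) → ℝ) (hcont : Continuous R) :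
    Continuous fun x : Fin k → ℝ => R (Fin.cons 0 x) := by
  apply hcont.comp
  apply continuous_pi
  intro i
  induction i using Fin.cases with
  | zero => exact continuous_const
  | succ j => exact continuous_apply j

section Msup

variable {m : ℕ} (R : (Fin m → ℝ) → ℝ)

lemma Msup_set_eq (s : ℝ) :
    {d : ℝ | ∃ σ : Fin m → ℝ, (∀ j, |σ j| ≤ s) ∧ d = |R σ|}
      = (fun σ => |R σ|) '' (Set.univ.pi fun _ : Fin m => Icc (-s) s) := by
  ext d
  constructor
  · rintro ⟨σ, h1, rfl⟩
    exact ⟨σ, fun j _ => abs_le.1 (h1 j), rfl⟩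
  · rintro ⟨σ, h1, rfl⟩
    exact ⟨σ, fun j => abs_le.2 (h1 j (mem_univ j)), rfl⟩

lemma Msup_bddAbove (hcont : Continuous R) (s : ℝ) :
    BddAbove {d : ℝ | ∃ σ : Fin m → ℝ, (∀ j, |σ j| ≤ s) ∧ d = |R σ|} := by
  rw [Msup_set_eq]
  exact ((isCompact_univ_pi fun _ => isCompact_Icc).image hcont.abs).bddAbove

lemma abs_le_Msup (hcont : Continuous R) (s : ℝ) (σ : Fin m → ℝ) (hσ : ∀ j, |σ j| ≤ s) :
    |R σ| ≤ sSup {d : ℝ | ∃ σ : Fin m → ℝ, (∀ j, |σ j| ≤ s) ∧ d = |R σ|} :=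
  le_csSup (Msup_bddAbove R hcont s) ⟨σ, hσ, rfl⟩

lemma Msup_nonneg (hcont : Continuous R) {s : ℝ} (hs : 0 ≤ s) :
    0 ≤ sSup {d : ℝ | ∃ σ : Fin m → ℝ, (∀ j, |σ j| ≤ s) ∧ d = |R σ|} :=
  le_trans (abs_nonneg _) (abs_le_Msup R hcont s 0 (fun j => by simpa using hs))

lemma Msup_mono (hcont : Continuous R) {s s' : ℝ} (hs : 0 ≤ s) (hss' : s ≤ s') :
    sSup {d : ℝ | ∃ σ : Fin m → ℝ, (∀ j, |σ j| ≤ s) ∧ d = |R σ|}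
      ≤ sSup {d : ℝ | ∃ σ : Fin m → ℝ, (∀ j, |σ j| ≤ s') ∧ d = |R σ|} := by
  apply csSup_le_csSup (Msup_bddAbove R hcont s')
  · exact ⟨|R 0|, 0, fun j => by simpa using hs, rfl⟩
  · rintro d ⟨σ, h1, rfl⟩
    exact ⟨σ, fun j => (h1 j).trans hss', rfl⟩

/-- basic integral bound over the cube -/
lemma norm_integral_Qc_le (hcont : Continuous R) {s s' : ℝ} (hs : 0 ≤ s) (hss' : s ≤ s') :
    ‖∫ σ in Qc m s, R σ‖
      ≤ s ^ m * sSup {d : ℝ | ∃ σ : Fin m → ℝ, (∀ j, |σ j| ≤ s') ∧ d = |R σ|} := by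
  have h := norm_setIntegral_le_of_norm_le_const (μ := volume) (s := Qc m s)
    (f := R) (C := sSup {d : ℝ | ∃ σ : Fin m → ℝ, (∀ j, |σ j| ≤ s') ∧ d = |R σ|})
    (by rw [volume_Qc m s hs]; exact ENNReal.ofReal_lt_top)
    (fun σ hσ => by
      rw [Real.norm_eq_abs]
      refine abs_le_Msup R hcont s' σ fun j => ?_
      have := hσ j (mem_univ j)
      rw [abs_le]
      exact ⟨by linarith [this.1], (this.2).trans hss'⟩)
  rw [measureReal_def, volume_Qc m s hs, ENNReal.toReal_ofReal (pow_nonneg hs m)] at h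
  linarith [h]

end Msup

lemma hasDerivAt_cube {k : ℕ} (R : (Fin (k + 1) → ℝ) → ℝ) (hcont : Continuous R)
    (hsymm : ∀ (σ : Fin (k+1) → ℝ) (π : Equiv.Perm (Fin (k+1))), R (σ ∘ π) = R σ)
    (htrans : ∀ (σ : Fin (k+1) → ℝ) (c : ℝ), R (fun i => σ i + c) = R σ)
    (s : ℝ) (hs : 0 < s) :
    HasDerivAt (fun r : ℝ => ∫ σ in Qc (k+1) r, R σ)
      ((k + 1 : ℝ) * ∫ x in Qc k s, R (Fin.cons 0 x)) s := by
  have hg : Continuous fun t : ℝ => ∫ x in Qc k t, R (Fin.cons 0 x) :=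
    continuous_cube_integral _ (continuous_consR R hcont)
  have hFTC : HasDerivAt (fun r : ℝ => ∫ t in (0:ℝ)..r, ∫ x in Qc k t, R (Fin.cons 0 x))
      (∫ x in Qc k s, R (Fin.cons 0 x)) s :=
    intervalIntegral.integral_hasDerivAt_right (hg.intervalIntegrable _ _)
      (hg.stronglyMeasurableAtFilter _ _) hg.continuousAt
  have h2 := hFTC.const_mul ((k:ℝ) + 1)
  refine HasDerivAt.congr_of_eventuallyEq h2 ?_
  filter_upwards [Ioi_mem_nhds hs] with r hr
  exact cube_integral_eq R hcont hsymm htrans r (le_of_lt hr)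

/-- the summand functions -/
noncomputable def fF (R : (m : ℕ) → (Fin m → ℝ) → ℝ) (m : ℕ) (s : ℝ) : ℝ :=
  (-1 : ℝ) ^ m / m.factorial *
    ∫ σ in Set.univ.pi (fun _ : Fin m => Set.Icc (0 : ℝ) s), R m σ

/-- the derivative functions -/
noncomputable def fD (R : (m : ℕ) → (Fin m → ℝ) → ℝ) : ℕ → ℝ → ℝ
  | 0, _ => 0
  | (k+1), s => (-1 : ℝ) ^ (k + 1) / k.factorial *
      ∫ x in Set.univ.pi (fun _ : Fin k => Set.Icc (0 : ℝ) s), R (k+1) (Fin.cons 0 x)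

end GapAux

open GapAux

/-- Differentiation of the gap probability generating series:
`H'(u) = Σ_{m≥1} ((−1)^m/(m−1)!) ∫_{[0,u]^{m−1}} R_m(0,x₂,…,x_m) dx`. -/
theorem hasDerivAt_gap_series (R : (m : ℕ) → (Fin m → ℝ) → ℝ)
    (hcont : ∀ m, Continuous (R m))
    (hsymm : ∀ (m : ℕ) (σ : Fin m → ℝ) (π : Equiv.Perm (Fin m)),
      R m (σ ∘ π) = R m σ)
    (htrans : ∀ (m : ℕ) (σ : Fin m → ℝ) (c : ℝ),
      R m (fun i => σ i + c) = R m σ)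
    (hsum : ∀ s : ℝ, 0 ≤ s → Summable (fun m : ℕ =>
      s ^ m / m.factorial *
        sSup {d : ℝ | ∃ σ : Fin m → ℝ, (∀ j, |σ j| ≤ s) ∧ d = |R m σ|}))
    (u : ℝ) (hu : 0 < u) :
    HasDerivAt (fun s : ℝ => ∑' m : ℕ, (-1 : ℝ) ^ m / m.factorial *
        ∫ σ in Set.univ.pi (fun _ : Fin m => Set.Icc (0 : ℝ) s), R m σ)
      (∑' m : ℕ, (-1 : ℝ) ^ (m + 1) / m.factorial *
        ∫ x in Set.univ.pi (fun _ : Fin m => Set.Icc (0 : ℝ) u),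
          R (m + 1) (Fin.cons 0 x))
      u := by
  set s0 : ℝ := u + 1 with hs0def
  have hs0one : (1:ℝ) ≤ s0 := by simp [hs0def]; linarith
  have hs0pos : (0:ℝ) < s0 := lt_of_lt_of_le one_pos hs0one
  set M : ℕ → ℝ := fun m =>
    sSup {d : ℝ | ∃ σ : Fin m → ℝ, (∀ j, |σ j| ≤ 2 * s0) ∧ d = |R m σ|} with hMdef
  have hMnonneg : ∀ m, 0 ≤ M m := fun m => Msup_nonneg (R m) (hcont m) (by linarith)
  -- the summable bound
  have hbound : Summable (fun m : ℕ => (2 * s0) ^ m / m.factorial * M m) :=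
    hsum (2 * s0) (by linarith)
  -- derivative of each term on Ioo 0 s0
  have hg : ∀ (m : ℕ), ∀ y ∈ Ioo (0:ℝ) s0, HasDerivAt (fF R m) (fD R m y) y := by
    intro m y hy
    match m with
    | 0 =>
      have hconst : fF R 0 = fun _ : ℝ => (-1:ℝ) ^ 0 / (Nat.factorial 0) *
          ∫ σ in (Set.univ : Set (Fin 0 → ℝ)), R 0 σ := by
        funext r
        rw [fF]
        have hset : (Set.univ.pi fun _ : Fin 0 => Set.Icc (0:ℝ) r) = Set.univ := by
          ext σ
          simp [Set.mem_pi]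
        rw [hset]
      rw [hconst]
      exact hasDerivAt_const y _
    | (k+1) =>
      have hder := (hasDerivAt_cube (R (k+1)) (hcont (k+1)) (hsymm (k+1)) (htrans (k+1))
        y hy.1).const_mul ((-1:ℝ) ^ (k+1) / (k+1).factorial)
      have harith : (-1:ℝ) ^ (k+1) / (k+1).factorial * (((k:ℝ) + 1) *
          ∫ x in Qc k y, R (k+1) (Fin.cons 0 x)) = fD R (k+1) y := by
        rw [fD]
        have hQ : (Set.univ.pi fun _ : Fin k => Set.Icc (0:ℝ) y) = Qc k y := rfl
        rw [hQ, Nat.factorial_succ]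
        set A := ∫ x in Qc k y, R (k+1) (Fin.cons 0 x) with hA
        push_cast
        have hfacpos : (0:ℝ) < (k.factorial : ℝ) := by positivity
        field_simp
      rw [← harith]
      exact hder
  -- the uniform bound on derivatives
  have hg' : ∀ (m : ℕ), ∀ y ∈ Ioo (0:ℝ) s0, ‖fD R m y‖ ≤ (2 * s0) ^ m / m.factorial * M m := by
    intro m y hy
    match m with
    | 0 =>
      rw [fD]
      simp only [norm_zero]
      have := hMnonneg 0
      positivity
    | (k+1) =>
      rw [fD]
      have h1 : ‖∫ x in Qc k y, R (k+1) (Fin.cons 0 x)‖ ≤ y ^ k * M (k+1) := by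
        have h := norm_setIntegral_le_of_norm_le_const (μ := volume) (s := Qc k y)
          (f := fun x => R (k+1) (Fin.cons 0 x)) (C := M (k+1))
          (by rw [volume_Qc k y hy.1.le]; exact ENNReal.ofReal_lt_top)
          (fun x hx => by
            rw [Real.norm_eq_abs, hMdef]
            refine abs_le_Msup (R (k+1)) (hcont (k+1)) (2*s0) _ fun j => ?_
            induction j using Fin.cases with
            | zero => simp; linarith
            | succ i =>
              rw [Fin.cons_succ]
              have := hx i (mem_univ i)
              rw [abs_le]
              constructor
              · linarith [this.1]
              · have h2 := this.2
                have : y ≤ 2 * s0 := by linarith [hy.2]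
                linarith
          )
        rw [measureReal_def, volume_Qc k y hy.1.le, ENNReal.toReal_ofReal (pow_nonneg hy.1.le k)] at h
        linarith
      rw [norm_mul, Real.norm_eq_abs, Real.norm_eq_abs]
      have hcoef : |(-1:ℝ) ^ (k+1) / (k).factorial| = 1 / k.factorial := by
        rw [abs_div, abs_pow, abs_neg, abs_one, one_pow, abs_of_nonneg]
        positivity
      rw [hcoef]
      have hyk : y ^ k ≤ s0 ^ k := pow_le_pow_left₀ hy.1.le hy.2.le k
      have hfacpos : (0:ℝ) < (k.factorial : ℝ) := by positivity
      have hstep1 : 1 / (k.factorial:ℝ) * |∫ x in Qc k y, R (k+1) (Fin.cons 0 x)|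
          ≤ 1 / (k.factorial:ℝ) * (s0 ^ k * M (k+1)) := by
        rw [Real.norm_eq_abs] at h1
        have h2 : |∫ x in Qc k y, R (k+1) (Fin.cons 0 x)| ≤ s0 ^ k * M (k+1) :=
          h1.trans (mul_le_mul_of_nonneg_right hyk (hMnonneg (k+1)))
        exact mul_le_mul_of_nonneg_left h2 (by positivity)
      refine hstep1.trans ?_
      -- scalar inequality
      have hk2 : ((k:ℝ) + 1) ≤ 2 ^ (k+1) * s0 := by
        have h2p : ((k:ℝ) + 1) ≤ 2 ^ (k+1) := by
          exact_mod_cast Nat.le_of_lt (Nat.lt_two_pow_self (n := k+1))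
        calc ((k:ℝ) + 1) ≤ 2 ^ (k+1) := h2p
          _ = 2 ^ (k+1) * 1 := by ring
          _ ≤ 2 ^ (k+1) * s0 := by
            apply mul_le_mul_of_nonneg_left hs0one
            positivity
      have hscalar : 1 / (k.factorial:ℝ) * s0 ^ k ≤ (2 * s0) ^ (k+1) / (k+1).factorial := by
        rw [mul_pow, Nat.factorial_succ]
        push_cast
        rw [one_div_mul_eq_div, div_le_div_iff₀ hfacpos (by positivity)]
        have hs0k : (0:ℝ) ≤ s0 ^ k := by positivity
        calc s0 ^ k * (((k:ℝ) + 1) * (k.factorial:ℝ))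
            ≤ s0 ^ k * ((2 ^ (k+1) * s0) * (k.factorial:ℝ)) := by
              apply mul_le_mul_of_nonneg_left _ hs0k
              exact mul_le_mul_of_nonneg_right hk2 hfacpos.le
          _ = 2 ^ (k+1) * s0 ^ (k+1) * (k.factorial:ℝ) := by ring
      calc 1 / (k.factorial:ℝ) * (s0 ^ k * M (k+1))
          = (1 / (k.factorial:ℝ) * s0 ^ k) * M (k+1) := by ring
        _ ≤ ((2 * s0) ^ (k+1) / (k+1).factorial) * M (k+1) :=
            mul_le_mul_of_nonneg_right hscalar (hMnonneg (k+1))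
  -- summability at the point u
  have humem : u ∈ Ioo (0:ℝ) s0 := ⟨hu, by simp [hs0def]⟩
  have hg0 : Summable (fun m => fF R m u) := by
    refine Summable.of_norm_bounded (hsum u hu.le) fun m => ?_
    rw [fF, norm_mul, Real.norm_eq_abs]
    have hcoef : |(-1:ℝ) ^ m / (m).factorial| = 1 / m.factorial := by
      rw [abs_div, abs_pow, abs_neg, abs_one, one_pow, abs_of_nonneg]
      positivity
    rw [hcoef]
    have h1 : ‖∫ σ in Qc m u, R m σ‖ ≤ u ^ m *
        sSup {d : ℝ | ∃ σ : Fin m → ℝ, (∀ j, |σ j| ≤ u) ∧ d = |R m σ|} :=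
      norm_integral_Qc_le (R m) (hcont m) hu.le le_rfl
    calc 1 / (m.factorial:ℝ) * ‖∫ σ in Qc m u, R m σ‖
        ≤ 1 / (m.factorial:ℝ) * (u ^ m *
          sSup {d : ℝ | ∃ σ : Fin m → ℝ, (∀ j, |σ j| ≤ u) ∧ d = |R m σ|}) := by
          apply mul_le_mul_of_nonneg_left h1
          positivity
      _ = u ^ m / (m.factorial:ℝ) *
          sSup {d : ℝ | ∃ σ : Fin m → ℝ, (∀ j, |σ j| ≤ u) ∧ d = |R m σ|} := by ring
  -- apply the series differentiation theorem
  have H := hasDerivAt_tsum_of_isPreconnected hbound isOpen_Ioo isPreconnected_Ioo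
    hg hg' humem hg0 humem
  -- identify the derivative
  have hDsummable : Summable (fun m => fD R m u) :=
    Summable.of_norm_bounded hbound fun m => hg' m u humem
  have heq : (∑' m, fD R m u) = ∑' m : ℕ, (-1 : ℝ) ^ (m + 1) / m.factorial *
      ∫ x in Set.univ.pi (fun _ : Fin m => Set.Icc (0 : ℝ) u), R (m + 1) (Fin.cons 0 x) := by
    rw [Summable.tsum_eq_zero_add hDsummable]
    have h0 : fD R 0 u = 0 := rfl
    rw [h0, zero_add]
    rfl
  rw [heq] at H
  exact H
end
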